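/- Let $s\le 0$, $j\in\mathbb{R}^d\setminus\{0\}$. There is a constant $C=C(j,s)$ independent of $p,q\in[1,\infty]$ and $\varepsilon\in(0,1]$ such that for all $f\in\mathcal{S}(\mathbb{R}^d)$, $\|f(\cdot)e^{ij\cdot x/\varepsilon}\|_{M^{p,q}_s}\le C\,\varepsilon^{|s|}\,\|f\|_{M^{p,q}_{|s|}}$. -/

import Mathlib

open MeasureTheory
open scoped RealInnerProductSpace ENNReal

noncomputable section

/-- The short-time Fourier transform
`V_g f(x,y) = ∫ f(t) conj(g(t-x)) e^{-iy⋅t} dt`. -/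
def STFT (d : ℕ) (g f : EuclideanSpace ℝ (Fin d) → ℂ)
    (x y : EuclideanSpace ℝ (Fin d)) : ℂ :=
  ∫ t, f t * (starRingEnd ℂ) (g (t - x)) * Complex.exp (-(Complex.I * ((⟪y, t⟫ : ℝ) : ℂ)))

/-- The modulation space norm
`‖f‖_{M^{p,q}_s} = ‖ ‖V_g f(x,y)‖_{L^p_x} ⟨y⟩^s ‖_{L^q_y}`. -/
def Mnorm (d : ℕ) (g : EuclideanSpace ℝ (Fin d) → ℂ) (p q : ℝ≥0∞) (s : ℝ)
    (f : EuclideanSpace ℝ (Fin d) → ℂ) : ℝ≥0∞ :=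
  eLpNorm (fun y : EuclideanSpace ℝ (Fin d) =>
    (eLpNorm (fun x => STFT d g f x y) p volume).toReal * (1 + ‖y‖ ^ 2) ^ (s / 2)) q volume

/-!
Modulating by `e^{i⟪j,x⟫/ε}` translates the short-time Fourier transform in frequency by `j/ε`,
so the modulated norm is the unmodulated one with the weight `⟨y⟩^s` replaced by `⟨y + j/ε⟩^s`.
Peetre's inequality `|j/ε|^{|s|} ≲ ⟨y⟩^{|s|} ⟨y + j/ε⟩^{|s|}` bounds that weight by
`ε^{|s|} |j|^{-|s|} ⟨y⟩^{|s|}`, and the `L^q` norm in frequency is translation invariant.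
-/

theorem eLpNorm_comp_sub_right {G F : Type*} [AddGroup G] [MeasurableSpace G] [MeasurableAdd G]
    [NormedAddCommGroup F] (μ : Measure G) [μ.IsAddRightInvariant] (f : G → F) (v : G)
    (p : ℝ≥0∞) :
    eLpNorm (fun y => f (y - v)) p μ = eLpNorm f p μ :=
  calc eLpNorm (fun y => f (y - v)) p μ = eLpNorm f p (μ.map (· - v)) :=
        ((MeasurableEquiv.subRight v).measurableEmbedding.eLpNorm_map_measure).symm
    _ = eLpNorm f p μ := by rw [(measurePreserving_sub_right μ v).map_eq]

section Peetre

variable {E : Type*}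

theorem sq_norm_le_two_mul_one_add_sq_mul_one_add_sq [SeminormedAddGroup E] (y v : E) :
    ‖v‖ ^ 2 ≤ 2 * (1 + ‖y‖ ^ 2) * (1 + ‖y - v‖ ^ 2) := by
  have htri : ‖v‖ ≤ ‖y‖ + ‖y - v‖ := norm_le_norm_add_norm_sub y v
  nlinarith [norm_nonneg v, norm_nonneg y, norm_nonneg (y - v),
    sq_nonneg (‖y‖ - ‖y - v‖), sq_nonneg (‖y‖ * ‖y - v‖)]

theorem one_add_sq_rpow_neg_le [NormedAddGroup E] (y : E) {v : E} (hv : v ≠ 0) {t : ℝ}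
    (ht : 0 ≤ t) :
    (1 + ‖y‖ ^ 2) ^ (-(t / 2)) ≤ 2 ^ (t / 2) * ‖v‖ ^ (-t) * (1 + ‖y - v‖ ^ 2) ^ (t / 2) := by
  have hvpos : 0 < ‖v‖ := norm_pos_iff.2 hv
  have ha : 0 < 1 + ‖y‖ ^ 2 := by positivity
  have hpow : ‖v‖ ^ t ≤ 2 ^ (t / 2) * (1 + ‖y‖ ^ 2) ^ (t / 2) * (1 + ‖y - v‖ ^ 2) ^ (t / 2) := by
    calc ‖v‖ ^ t = (‖v‖ ^ 2) ^ (t / 2) := by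
          rw [← Real.rpow_natCast, ← Real.rpow_mul hvpos.le]; ring_nf
      _ ≤ (2 * (1 + ‖y‖ ^ 2) * (1 + ‖y - v‖ ^ 2)) ^ (t / 2) :=
          Real.rpow_le_rpow (by positivity) (sq_norm_le_two_mul_one_add_sq_mul_one_add_sq y v)
            (by positivity)
      _ = _ := by rw [Real.mul_rpow (by positivity) (by positivity),
          Real.mul_rpow (by positivity) ha.le]
  rw [Real.rpow_neg ha.le, Real.rpow_neg hvpos.le, inv_le_iff_one_le_mul₀ (by positivity)]
  calc (1 : ℝ) = (‖v‖ ^ t)⁻¹ * ‖v‖ ^ t := (inv_mul_cancel₀ (by positivity)).symm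
    _ ≤ (‖v‖ ^ t)⁻¹ * (2 ^ (t / 2) * (1 + ‖y‖ ^ 2) ^ (t / 2) * (1 + ‖y - v‖ ^ 2) ^ (t / 2)) :=
        by gcongr
    _ = _ := by ring

end Peetre

section Modulation

variable (d : ℕ) (g f : EuclideanSpace ℝ (Fin d) → ℂ)

theorem STFT_mul_exp_inner (w x y : EuclideanSpace ℝ (Fin d)) :
    STFT d g (fun t => f t * Complex.exp (Complex.I * ((⟪w, t⟫ : ℝ) : ℂ))) x y =
      STFT d g f x (y - w) := by
  unfold STFT
  congr 1 with t
  have hexp : Complex.exp (Complex.I * ((⟪w, t⟫ : ℝ) : ℂ)) *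
      Complex.exp (-(Complex.I * ((⟪y, t⟫ : ℝ) : ℂ))) =
      Complex.exp (-(Complex.I * ((⟪y, t⟫ - ⟪w, t⟫ : ℝ) : ℂ))) := by
    rw [← Complex.exp_add]; push_cast; ring_nf
  rw [inner_sub_left, ← hexp]
  ring

theorem Mnorm_mul_exp_inner_le (p q : ℝ≥0∞) {s t c : ℝ} (hc : 0 ≤ c)
    (w : EuclideanSpace ℝ (Fin d))
    (hweight : ∀ y, (1 + ‖y‖ ^ 2) ^ (s / 2) ≤ c * (1 + ‖y - w‖ ^ 2) ^ (t / 2)) :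
    Mnorm d g p q s (fun x => f x * Complex.exp (Complex.I * ((⟪w, x⟫ : ℝ) : ℂ))) ≤
      ENNReal.ofReal c * Mnorm d g p q t f := by
  set F : EuclideanSpace ℝ (Fin d) → ℝ := fun y => (eLpNorm (fun x => STFT d g f x y) p volume).toReal
  have hF : Mnorm d g p q s (fun x => f x * Complex.exp (Complex.I * ((⟪w, x⟫ : ℝ) : ℂ))) =
      eLpNorm (fun y => F (y - w) * (1 + ‖y‖ ^ 2) ^ (s / 2)) q volume := by
    simp only [Mnorm, STFT_mul_exp_inner, F]
  calc Mnorm d g p q s (fun x => f x * Complex.exp (Complex.I * ((⟪w, x⟫ : ℝ) : ℂ)))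
      ≤ eLpNorm (c • fun y => F (y - w) * (1 + ‖y - w‖ ^ 2) ^ (t / 2)) q volume := by
        rw [hF]
        refine eLpNorm_mono_real fun y => ?_
        have hFy : 0 ≤ F (y - w) := ENNReal.toReal_nonneg
        rw [Real.norm_of_nonneg (by positivity), Pi.smul_apply, smul_eq_mul, mul_left_comm]
        exact mul_le_mul_of_nonneg_left (hweight y) hFy
    _ = ENNReal.ofReal c * Mnorm d g p q t f := by
        rw [eLpNorm_const_smul, Real.enorm_of_nonneg hc,
          eLpNorm_comp_sub_right volume (fun y => F y * (1 + ‖y‖ ^ 2) ^ (t / 2))]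
        rfl

end Modulation

theorem modulation_space_modulation_decay_general (d : ℕ) (s : ℝ) (hs : s ≤ 0)
    (j : EuclideanSpace ℝ (Fin d)) (hj : j ≠ 0)
    (g : SchwartzMap (EuclideanSpace ℝ (Fin d)) ℂ) :
    ∃ C : ℝ, 0 < C ∧ ∀ p q : ℝ≥0∞, 1 ≤ p → 1 ≤ q → ∀ ε : ℝ, ε ∈ Set.Ioc (0 : ℝ) 1 →
      ∀ f : SchwartzMap (EuclideanSpace ℝ (Fin d)) ℂ,
        Mnorm d (fun x => g x) p q s
            (fun x => f x * Complex.exp (Complex.I * ((⟪j, x⟫ / ε : ℝ) : ℂ))) ≤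
          ENNReal.ofReal (C * ε ^ |s|) * Mnorm d (fun x => g x) p q |s| (fun x => f x) := by
  have hjpos : 0 < ‖j‖ := norm_pos_iff.2 hj
  refine ⟨2 ^ (|s| / 2) * ‖j‖ ^ (-|s|), by positivity, fun p q _ _ ε ⟨hε, _⟩ f => ?_⟩
  have hinner : ∀ x, ⟪j, x⟫ / ε = ⟪ε⁻¹ • j, x⟫ := fun x => by
    rw [real_inner_smul_left, inv_mul_eq_div]
  simp only [hinner]
  refine Mnorm_mul_exp_inner_le d _ _ p q (by positivity) _ fun y => ?_
  have hnorm : ‖ε⁻¹ • j‖ ^ (-|s|) = ‖j‖ ^ (-|s|) * ε ^ |s| := by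
    rw [norm_smul, norm_inv, Real.norm_of_nonneg hε.le,
      Real.mul_rpow (by positivity) hjpos.le, Real.inv_rpow hε.le, ← Real.rpow_neg hε.le, neg_neg,
      mul_comm]
  have hs' : s / 2 = -(|s| / 2) := by rw [abs_of_nonpos hs]; ring
  calc (1 + ‖y‖ ^ 2) ^ (s / 2)
      ≤ 2 ^ (|s| / 2) * ‖ε⁻¹ • j‖ ^ (-|s|) * (1 + ‖y - ε⁻¹ • j‖ ^ 2) ^ (|s| / 2) := by
        rw [hs']
        exact one_add_sq_rpow_neg_le y (smul_ne_zero (inv_ne_zero hε.ne') hj) (abs_nonneg s)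
    _ = _ := by rw [hnorm]; ring

/-- For `j ≠ 0` and `s ≤ 0`, the modulation `f e^{ij·x/ε}` loses a factor `ε^{|s|}`
in modulation spaces, uniformly in `p, q ∈ [1,∞]` and `ε ∈ (0,1]`. -/
theorem modulation_space_modulation_decay (d : ℕ) (hd : 1 ≤ d) (s : ℝ) (hs : s ≤ 0)
    (j : EuclideanSpace ℝ (Fin d)) (hj : j ≠ 0)
    (g : SchwartzMap (EuclideanSpace ℝ (Fin d)) ℂ) (hg : (g : EuclideanSpace ℝ (Fin d) → ℂ) ≠ 0) :
    ∃ C : ℝ, 0 < C ∧ ∀ p q : ℝ≥0∞, 1 ≤ p → 1 ≤ q → ∀ ε : ℝ, ε ∈ Set.Ioc (0 : ℝ) 1 →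
      ∀ f : SchwartzMap (EuclideanSpace ℝ (Fin d)) ℂ,
        Mnorm d (fun x => g x) p q s
            (fun x => f x * Complex.exp (Complex.I * ((⟪j, x⟫ / ε : ℝ) : ℂ))) ≤
          ENNReal.ofReal (C * ε ^ |s|) * Mnorm d (fun x => g x) p q |s| (fun x => f x) :=
  modulation_space_modulation_decay_general d s hs j hj g
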